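/- Let I be a monomial ideal in R = k[x_1,...,x_r] and let the Newton polyhedron NP(I) be defined by inequalities ⟨a_j, x⟩ ≥ b_j, j = 1,...,q, with a_j ∈ ℕ^r, b_j ∈ ℕ. Then for any α ∈ ℕ^r and n ≥ 1, the simplicial complex Δ_α(\overline{I^n}) = {F ⊆ [r] : x^α ∉ \overline{I^n} R_F} is generated by the faces [r] \ supp(a_j) for those j with ⟨a_j, α⟩ < n b_j. -/

import Mathlib

open MvPolynomial Pointwise

/-- `J` is the integral closure of the ideal `I`: the set of elements `x` satisfying an
integral relation `x^n + a_1 x^{n-1} + ... + a_n = 0` with `a_i ∈ I^i`. -/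
def IsIntClosure {R : Type*} [CommRing R] (I J : Ideal R) : Prop :=
  ∀ x : R, x ∈ J ↔ ∃ n : ℕ, 0 < n ∧ ∃ a : ℕ → R, (∀ i, a i ∈ I ^ i) ∧
    x ^ n + ∑ i ∈ Finset.Icc 1 n, a i * x ^ (n - i) = 0

/-- A monomial ideal in a polynomial ring: an ideal generated by monomials. -/
def IsMonomialIdeal {k : Type*} [Field k] {σ : Type*} (I : Ideal (MvPolynomial σ k)) : Prop :=
  ∃ S : Set (σ →₀ ℕ), I = Ideal.span ((fun a => (monomial a (1 : k))) '' S)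

/-- depth of `R/J` with respect to the ideal `m`: the supremum of lengths of regular
sequences on `R/J` consisting of elements of `m`. -/
noncomputable def quotDepth {R : Type*} [CommRing R] (m J : Ideal R) : ℕ :=
  sSup {n : ℕ | ∃ rs : List R, rs.length = n ∧ (∀ x ∈ rs, x ∈ m) ∧
    RingTheory.Sequence.IsRegular (R ⧸ J) rs}

/-- `R/J` is Cohen-Macaulay: depth equals Krull dimension. -/
def QuotIsCM {R : Type*} [CommRing R] (m J : Ideal R) : Prop :=
  (quotDepth m J : WithBot ℕ∞) = ringKrullDim (R ⧸ J)

/-- Krull dimension of a ring, as a natural number. -/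
noncomputable def dimNat (R : Type*) [CommRing R] : ℕ :=
  ENat.toNat ((ringKrullDim R).unbotD 0)

/-- analytic spread of `I`: the Krull dimension of the fiber cone, i.e. of the
Rees algebra of `I` modulo the extension of the maximal ideal `m`. -/
noncomputable def analyticSpread {R : Type*} [CommRing R] (m I : Ideal R) : ℕ :=
  dimNat ((reesAlgebra I) ⧸ (Ideal.map (algebraMap R (reesAlgebra I)) m))

/-- height of an ideal: infimum of heights of primes containing it. -/
noncomputable def idealHeight {R : Type*} [CommRing R] (I : Ideal R) : ℕ∞ :=
  ⨅ p ∈ {p : PrimeSpectrum R | I ≤ p.asIdeal}, Order.height p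

/-- the maximal homogeneous ideal `(x_1,...,x_r)` of a polynomial ring. -/
noncomputable def maxIdeal (k : Type*) [Field k] (σ : Type*) : Ideal (MvPolynomial σ k) :=
  Ideal.span (Set.range X)

/-- exponent set of a monomial ideal, viewed in `ℝ^r`. -/
def expSet {k : Type*} [Field k] {r : ℕ} (I : Ideal (MvPolynomial (Fin r) k)) :
    Set (Fin r → ℝ) :=
  {x | ∃ a : Fin r →₀ ℕ, monomial a (1 : k) ∈ I ∧ x = fun i => (a i : ℝ)}

/-- Newton polyhedron of a monomial ideal: convex hull of the exponent set. -/
noncomputable def newtonPolyhedron {k : Type*} [Field k] {r : ℕ}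
    (I : Ideal (MvPolynomial (Fin r) k)) : Set (Fin r → ℝ) :=
  convexHull ℝ (expSet I)

/-- a simplicial complex on the vertex set `σ`: a downward closed family of finite sets. -/
def IsSimplicialComplex {σ : Type*} (Δ : Set (Finset σ)) : Prop :=
  ∅ ∈ Δ ∧ ∀ F ∈ Δ, ∀ G ⊆ F, G ∈ Δ

/-- Stanley-Reisner ideal of a simplicial complex: generated by the squarefree
monomials corresponding to non-faces. -/
noncomputable def srIdeal {k : Type*} [Field k] {σ : Type*} (Δ : Set (Finset σ)) :
    Ideal (MvPolynomial σ k) :=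
  Ideal.span {f | ∃ F : Finset σ, F ∉ Δ ∧ f = ∏ i ∈ F, X i}

/-- the degree complex `Δ_α(J)` of a monomial ideal `J`:
`F ∈ Δ_α(J)` iff `x^α ∉ J R_F`, i.e. no multiple of `x^α` by a monomial in the
variables of `F` lies in `J`. -/
def degComplex {k : Type*} [Field k] {r : ℕ} (J : Ideal (MvPolynomial (Fin r) k))
    (α : Fin r →₀ ℕ) : Set (Finset (Fin r)) :=
  {F | ∀ γ : Fin r →₀ ℕ, (∀ i, γ i ≠ 0 → i ∈ F) → monomial (α + γ) (1 : k) ∉ J}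

/-- an ideal is unmixed if all associated primes of `R/J` have the same height. -/
def IsUnmixed {R : Type*} [CommRing R] (J : Ideal R) : Prop :=
  ∀ p ∈ associatedPrimes R (R ⧸ J), ∀ q ∈ associatedPrimes R (R ⧸ J),
    idealHeight p = idealHeight q

/-!
Since `J` is the integral closure of `I ^ n`, a monomial `x^β` lies in `J` exactly when
`β ∈ n • NP(I)`, i.e. when `⟨a_j, β⟩ ≥ n b_j` for all `j`. One direction reads the inequality
off the integral equation: some `x^{iβ}` must occur in a coefficient from `I^{ni}`, all of whose
monomials have `a_j`-weight at least `n i b_j`. For the other, `β / n` is a convex combination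
of exponents of `I`; these weights can be taken rational, and clearing denominators exhibits
`x^{Dβ}` as a product of `nD` generators of `I`.

Given this membership criterion, `x^{α+γ}` with `γ` supported on `F` avoids `J` for every such
`γ` precisely when some violated inequality `⟨a_j, α⟩ < n b_j` does not see the variables of `F`;
otherwise making `γ` large on `F` satisfies all the inequalities.
-/

universe u

theorem Finsupp.weight_mono {σ : Type*} (w : σ → ℕ) :
    Monotone (Finsupp.weight w : (σ →₀ ℕ) →+ ℕ) := by
  intro d e h
  obtain ⟨d', rfl⟩ := le_iff_exists_add.1 h
  simp only [map_add, le_add_iff_nonneg_right, zero_le]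

theorem Finsupp.weight_eq_sum_mul {σ : Type*} [Fintype σ] (w : σ → ℕ) (e : σ →₀ ℕ) :
    Finsupp.weight w e = ∑ i, w i * e i := by
  simp only [Finsupp.weight_eq_sum, smul_eq_mul, mul_comm]

theorem Rat.exists_nat_mul_eq_of_nonneg {κ : Type*} [Fintype κ] {w : κ → ℚ} (hw : ∀ k, 0 ≤ w k) :
    ∃ D : ℕ, 0 < D ∧ ∃ P : κ → ℕ, ∀ k, (P k : ℚ) = D * w k := by
  refine ⟨∏ k, (w k).den, Finset.prod_pos fun k _ => (w k).pos,
    fun k => (∏ k, (w k).den) / (w k).den * (w k).num.natAbs, fun k => ?_⟩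
  have hdvd : (w k).den ∣ ∏ k, (w k).den := Finset.dvd_prod_of_mem _ (Finset.mem_univ k)
  rw [Nat.cast_mul, Nat.cast_div hdvd (by exact_mod_cast (w k).den_nz), Nat.cast_natAbs,
    Int.cast_abs, abs_of_nonneg (Int.cast_nonneg_iff.2 (Rat.num_nonneg.2 (hw k))),
    div_mul_eq_mul_div, mul_div_assoc, Rat.num_div_den]

theorem mem_convexHull_of_cast_mem_convexHull {ι : Type*} {s : Set (ι → ℚ)} {x : ι → ℚ}
    (hx : (fun i => (x i : ℝ)) ∈ convexHull ℝ ((fun p i => (p i : ℝ)) '' s)) :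
    x ∈ convexHull ℚ s := by
  obtain ⟨κ, _, z, w, hzs, hind, hw0, hw1, hwx⟩ := eq_pos_convex_span_of_mem_convexHull hx
  choose z' hz's hz'z using fun k => hzs ⟨k, rfl⟩
  -- a `ℚ`-linear retraction `π : ℝ → ℚ` carries the real weights to rational ones
  obtain ⟨π, hπ⟩ := (Algebra.linearMap ℚ ℝ).exists_leftInverse_of_injective
    (LinearMap.ker_eq_bot.2 (algebraMap ℚ ℝ).injective)
  have hπ_mul (q : ℚ) (t : ℝ) : π (q * t) = q * π t := by
    rw [← Rat.smul_def, map_smul, smul_eq_mul]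
  have hπ_cast (q : ℚ) : π q = q := LinearMap.congr_fun hπ q
  have hw'1 : ∑ k, π (w k) = 1 := by rw [← map_sum, hw1, ← Rat.cast_one, hπ_cast]
  have hw'x : ∑ k, π (w k) • z' k = x := by
    ext i
    have := congrArg π (congrFun hwx i)
    simp only [Finset.sum_apply, Pi.smul_apply, smul_eq_mul, map_sum, ← hz'z] at this
    simp only [Finset.sum_apply, Pi.smul_apply, smul_eq_mul]
    rw [← hπ_cast (x i), ← this]
    exact Finset.sum_congr rfl fun k _ => by rw [mul_comm (w k), hπ_mul, mul_comm]
  -- the barycentric coordinates with respect to the affinely independent `z` are unique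
  have hw_eq : w = fun k => (π (w k) : ℝ) := by
    refine (affineIndependent_iff_eq_of_fintype_affineCombination_eq ℝ z).1 hind _ _ hw1
      (by exact_mod_cast hw'1) ?_
    rw [Finset.affineCombination_eq_linear_combination _ _ _ hw1,
      Finset.affineCombination_eq_linear_combination _ _ _ (by exact_mod_cast hw'1), hwx]
    ext i
    simp only [Finset.sum_apply, Pi.smul_apply, smul_eq_mul, ← hz'z, ← hw'x]
    push_cast
    rfl
  rw [← hw'x]
  refine (convex_convexHull ℚ s).sum_mem (fun k _ => ?_) hw'1
    fun k _ => subset_convexHull ℚ s (hz's k)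
  have : (0 : ℝ) ≤ π (w k) := congrFun hw_eq k ▸ (hw0 k).le
  exact_mod_cast this

theorem exists_nsmul_eq_sum_nsmul_of_mem_convexHull {E : Type u} [AddCommGroup E] [Module ℚ E]
    {s : Set E} {x : E} (hx : x ∈ convexHull ℚ s) :
    ∃ (κ : Type u) (_ : Fintype κ) (z : κ → E) (P : κ → ℕ),
      Set.range z ⊆ s ∧ 0 < ∑ k, P k ∧ (∑ k, P k) • x = ∑ k, P k • z k := by
  obtain ⟨κ, _, z, w, hzs, -, hw0, hw1, hwx⟩ := eq_pos_convex_span_of_mem_convexHull hx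
  obtain ⟨D, hD, P, hP⟩ := Rat.exists_nat_mul_eq_of_nonneg fun k => (hw0 k).le
  have hPsum : ∑ k, P k = D := by
    have : ∑ k, (P k : ℚ) = D := by simp only [hP, ← Finset.mul_sum, hw1, mul_one]
    exact_mod_cast this
  refine ⟨κ, inferInstance, z, P, hzs, hPsum ▸ hD, ?_⟩
  simp only [← Nat.cast_smul_eq_nsmul ℚ, hP, hPsum, ← hwx, Finset.smul_sum, mul_smul]

theorem IsIntClosure.mem_of_pow_mem_pow {R : Type*} [CommRing R] {K J : Ideal R}
    (hJ : IsIntClosure K J) {x : R} {D : ℕ} (hD : 0 < D) (hx : x ^ D ∈ K ^ D) : x ∈ J := by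
  refine (hJ x).2 ⟨D, hD, Pi.single D (-x ^ D), fun i => ?_, ?_⟩
  · rcases eq_or_ne i D with rfl | hi
    · simpa using hx
    · simp [Pi.single_eq_of_ne hi]
  · rw [Finset.sum_eq_single_of_mem D (Finset.mem_Icc.2 ⟨hD, le_rfl⟩)
      fun i _ hi => by rw [Pi.single_eq_of_ne hi, zero_mul]]
    simp

namespace MvPolynomial

variable {σ R : Type*}

section WeightIdeal

variable [CommSemiring R] {w : σ → ℕ}

variable (R w) in
def weightIdeal (c : ℕ) : Ideal (MvPolynomial σ R) where
  carrier := {f | ∀ e ∈ f.support, c ≤ Finsupp.weight w e}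
  zero_mem' := by simp
  add_mem' {f g} hf hg e he := by
    classical
    rcases Finset.mem_union.1 (support_add he) with he | he
    exacts [hf e he, hg e he]
  smul_mem' f g hg e he := by
    classical
    obtain ⟨d, -, d', hd', rfl⟩ := Finset.mem_add.1 (support_mul f g he)
    exact (hg d' hd').trans (Finsupp.weight_mono w le_add_self)

theorem span_monomial_le_weightIdeal {S : Set (σ →₀ ℕ)} {c : ℕ}
    (hS : ∀ s ∈ S, c ≤ Finsupp.weight w s) :
    Ideal.span ((fun s => monomial s (1 : R)) '' S) ≤ weightIdeal R w c := by
  intro f hf e he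
  obtain ⟨s, hs, hse⟩ := mem_ideal_span_monomial_image.1 hf e he
  exact (hS s hs).trans (Finsupp.weight_mono w hse)

theorem weightIdeal_mul_le (c c' : ℕ) :
    weightIdeal R w c * weightIdeal R w c' ≤ weightIdeal R w (c + c') := by
  classical
  refine Ideal.mul_le.2 fun f hf g hg e he => ?_
  obtain ⟨d, hd, d', hd', rfl⟩ := Finset.mem_add.1 (support_mul f g he)
  rw [map_add]
  exact add_le_add (hf d hd) (hg d' hd')

theorem weightIdeal_pow_le (c m : ℕ) : weightIdeal R w c ^ m ≤ weightIdeal R w (m * c) := by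
  induction m with
  | zero =>
    rw [pow_zero, zero_mul, Ideal.one_eq_top]
    exact fun f _ e _ => Nat.zero_le _
  | succ m ih =>
    rw [pow_succ, add_one_mul]
    exact (Ideal.mul_mono_left ih).trans (weightIdeal_mul_le _ _)

end WeightIdeal

theorem le_weight_of_integral_relation [CommRing R] [Nontrivial R] {w : σ → ℕ}
    {K : Ideal (MvPolynomial σ R)} {c : ℕ} (hK : K ≤ weightIdeal R w c) {β : σ →₀ ℕ} {m : ℕ}
    {a : ℕ → MvPolynomial σ R} (ha : ∀ i, a i ∈ K ^ i)
    (hrel : monomial β 1 ^ m + ∑ i ∈ Finset.Icc 1 m, a i * monomial β 1 ^ (m - i) = 0) :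
    c ≤ Finsupp.weight w β := by
  classical
  have hcoeff :
      (1 : R) + ∑ i ∈ Finset.Icc 1 m, coeff (m • β) (a i * monomial ((m - i) • β) 1) = 0 := by
    simpa only [coeff_add, coeff_sum, coeff_zero, monomial_pow, one_pow, coeff_monomial, if_pos]
      using congrArg (coeff (m • β)) hrel
  obtain ⟨i, hi, hne⟩ :
      ∃ i ∈ Finset.Icc 1 m, coeff (m • β) (a i * monomial ((m - i) • β) 1) ≠ 0 :=
    Finset.exists_ne_zero_of_sum_ne_zero (by
      rw [eq_neg_of_add_eq_zero_right hcoeff]; exact neg_ne_zero.2 one_ne_zero)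
  obtain ⟨hi1, him⟩ := Finset.mem_Icc.1 hi
  rw [show m • β = i • β + (m - i) • β by rw [← add_smul, Nat.add_sub_cancel' him],
    coeff_mul_monomial, mul_one] at hne
  have hwi : i * c ≤ i * Finsupp.weight w β := by
    rw [← smul_eq_mul (a := i) (b := Finsupp.weight w β), ← map_nsmul]
    exact weightIdeal_pow_le c i (Ideal.pow_right_mono hK i (ha i)) _ (mem_support_iff.2 hne)
  exact Nat.le_of_mul_le_mul_left hwi hi1

theorem monomial_sum_nsmul_mem_pow {κ : Type*} [CommSemiring R] [Fintype κ]
    {I : Ideal (MvPolynomial σ R)} {e : κ → σ →₀ ℕ} (he : ∀ k, monomial (e k) (1 : R) ∈ I)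
    (P : κ → ℕ) : monomial (∑ k, P k • e k) (1 : R) ∈ I ^ ∑ k, P k := by
  rw [monomial_sum_one, ← Finset.prod_pow_eq_pow_sum]
  refine Ideal.prod_mem_prod fun k _ => ?_
  rw [← one_pow (P k), ← monomial_pow]
  exact Ideal.pow_mem_pow (he k) _

end MvPolynomial

theorem IsIntClosure.le_weight_of_monomial_mem {σ R : Type*} [CommRing R] [Nontrivial R]
    {w : σ → ℕ} {c n : ℕ} {I J : Ideal (MvPolynomial σ R)} (hJ : IsIntClosure (I ^ n) J)
    (hI : I ≤ weightIdeal R w c) {β : σ →₀ ℕ} (hβ : monomial β (1 : R) ∈ J) :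
    n * c ≤ Finsupp.weight w β := by
  obtain ⟨m, -, a, ha, hrel⟩ := (hJ _).1 hβ
  exact le_weight_of_integral_relation
    ((Ideal.pow_right_mono hI n).trans (weightIdeal_pow_le c n)) ha hrel

section NewtonPolyhedron

variable {k : Type*} [Field k] {r q : ℕ}

theorem expSet_eq_image (I : Ideal (MvPolynomial (Fin r) k)) :
    expSet I = (fun p i => (p i : ℝ)) ''
      ((fun e i => (e i : ℚ)) '' {e : Fin r →₀ ℕ | monomial e (1 : k) ∈ I}) := by
  ext x
  simp [expSet, Set.image_image, eq_comm, funext_iff]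

theorem exists_monomial_nsmul_mem_pow_of_mem_newtonPolyhedron {I : Ideal (MvPolynomial (Fin r) k)}
    {n : ℕ} (hn : 0 < n) {β : Fin r →₀ ℕ}
    (hβ : (fun i => (β i : ℝ) / n) ∈ newtonPolyhedron I) :
    ∃ D : ℕ, 0 < D ∧ monomial (D • β) (1 : k) ∈ I ^ (n * D) := by
  have hβℚ : (fun i => (β i : ℚ) / n) ∈ convexHull ℚ
      ((fun e i => (e i : ℚ)) '' {e : Fin r →₀ ℕ | monomial e (1 : k) ∈ I}) := by
    refine mem_convexHull_of_cast_mem_convexHull ?_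
    rw [← expSet_eq_image]
    simpa only [newtonPolyhedron, Rat.cast_div, Rat.cast_natCast] using hβ
  obtain ⟨κ, _, z, P, hzs, hP, hPz⟩ := exists_nsmul_eq_sum_nsmul_of_mem_convexHull hβℚ
  choose e he hez using fun k => hzs ⟨k, rfl⟩
  refine ⟨∑ k, P k, hP, ?_⟩
  have hexp : (∑ k, P k) • β = ∑ k, (n * P k) • e k := by
    ext i
    have h := congrFun hPz i
    simp only [Finset.sum_apply, Pi.smul_apply] at h
    simp only [← hez, nsmul_eq_mul] at h
    apply Nat.cast_injective (R := ℚ)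
    simp only [Finsupp.smul_apply, Finsupp.finsetSum_apply, smul_eq_mul]
    push_cast at h ⊢
    have hn' : (n : ℚ) ≠ 0 := by positivity
    calc (∑ k, (P k : ℚ)) * β i = n * ((∑ k, (P k : ℚ)) * (β i / n)) := by field_simp
      _ = _ := by rw [h, Finset.mul_sum]; simp only [mul_assoc]
  rw [hexp, Finset.mul_sum]
  exact monomial_sum_nsmul_mem_pow he _

theorem le_weight_of_monomial_mem_of_newtonPolyhedron_eq {I : Ideal (MvPolynomial (Fin r) k)}
    {a : Fin q → Fin r → ℕ} {b : Fin q → ℕ}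
    (hNP : newtonPolyhedron I =
      {x : Fin r → ℝ | ∀ j : Fin q, (b j : ℝ) ≤ ∑ i, (a j i : ℝ) * x i})
    {e : Fin r →₀ ℕ} (he : monomial e (1 : k) ∈ I) (j : Fin q) :
    b j ≤ Finsupp.weight (a j) e := by
  have hmem : (fun i => (e i : ℝ)) ∈ newtonPolyhedron I := subset_convexHull ℝ _ ⟨e, he, rfl⟩
  rw [hNP] at hmem
  rw [Finsupp.weight_eq_sum_mul]
  have h : (b j : ℝ) ≤ ∑ i, (a j i : ℝ) * (e i : ℝ) := hmem j
  exact_mod_cast h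

theorem monomial_mem_intClosure_iff {I : Ideal (MvPolynomial (Fin r) k)}
    (hI : IsMonomialIdeal I) {a : Fin q → Fin r → ℕ} {b : Fin q → ℕ}
    (hNP : newtonPolyhedron I =
      {x : Fin r → ℝ | ∀ j : Fin q, (b j : ℝ) ≤ ∑ i, (a j i : ℝ) * x i})
    {n : ℕ} (hn : 1 ≤ n) {J : Ideal (MvPolynomial (Fin r) k)} (hJ : IsIntClosure (I ^ n) J)
    (β : Fin r →₀ ℕ) :
    monomial β (1 : k) ∈ J ↔ ∀ j, n * b j ≤ Finsupp.weight (a j) β := by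
  constructor
  · intro hβ j
    obtain ⟨S, hS⟩ := hI
    refine hJ.le_weight_of_monomial_mem ?_ hβ
    rw [hS]
    refine span_monomial_le_weightIdeal fun s hs =>
      le_weight_of_monomial_mem_of_newtonPolyhedron_eq hNP ?_ j
    exact hS ▸ Ideal.subset_span ⟨s, hs, rfl⟩
  · intro hβ
    have hβNP : (fun i => (β i : ℝ) / n) ∈ newtonPolyhedron I := by
      rw [hNP]
      intro j
      have h := hβ j
      rw [Finsupp.weight_eq_sum_mul] at h
      have hn' : (0 : ℝ) < n := by exact_mod_cast hn
      simp only [mul_div_assoc', ← Finset.sum_div, le_div_iff₀ hn']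
      rw [mul_comm]
      exact_mod_cast h
    obtain ⟨D, hD, hDβ⟩ := exists_monomial_nsmul_mem_pow_of_mem_newtonPolyhedron hn hβNP
    refine hJ.mem_of_pow_mem_pow hD ?_
    rwa [monomial_pow, one_pow, ← pow_mul]

theorem mem_degComplex_iff_of_monomial_mem_iff {J : Ideal (MvPolynomial (Fin r) k)}
    (a : Fin q → Fin r → ℕ) (c : Fin q → ℕ)
    (hJ : ∀ β, monomial β (1 : k) ∈ J ↔ ∀ j, c j ≤ Finsupp.weight (a j) β)
    (α : Fin r →₀ ℕ) (F : Finset (Fin r)) :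
    F ∈ degComplex J α ↔ ∃ j, Finsupp.weight (a j) α < c j ∧ ∀ i ∈ F, a j i = 0 := by
  constructor
  · intro hF
    by_contra! hcon
    -- raising every exponent on `F` to `∑ j, c j` satisfies all the inequalities
    set γ : Fin r →₀ ℕ := Finsupp.indicator F fun _ _ => ∑ j, c j
    refine hF γ (fun i hi => by by_contra h; simp [γ, h] at hi) ((hJ _).2 fun j => ?_)
    rw [map_add]
    by_cases hj : Finsupp.weight (a j) α < c j
    · obtain ⟨i, hiF, hai⟩ := hcon j hj
      calc c j ≤ ∑ j, c j := Finset.single_le_sum (fun _ _ => Nat.zero_le _) (Finset.mem_univ j)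
        _ = γ i := by simp [γ, hiF]
        _ ≤ Finsupp.weight (a j) γ := Finsupp.le_weight _ hai γ
        _ ≤ _ := Nat.le_add_left _ _
    · exact (not_lt.1 hj).trans (Nat.le_add_right _ _)
  · rintro ⟨j, hjα, hjF⟩ γ hγ hmem
    have hγ0 : Finsupp.weight (a j) γ = 0 := by
      rw [Finsupp.weight_eq_sum_mul]
      exact Finset.sum_eq_zero fun i _ => by
        by_cases h : γ i = 0
        · rw [h, mul_zero]
        · rw [hjF i (hγ i h), zero_mul]
    have := (hJ _).1 hmem j
    rw [map_add, hγ0, add_zero] at this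
    exact absurd this (not_le.2 hjα)

end NewtonPolyhedron

theorem degComplex_intClosure_pow_general {k : Type*} [Field k] {r q : ℕ}
    (I : Ideal (MvPolynomial (Fin r) k)) (hI : IsMonomialIdeal I)
    (a : Fin q → Fin r → ℕ) (b : Fin q → ℕ)
    (hNP : newtonPolyhedron I =
      {x : Fin r → ℝ | ∀ j : Fin q, (b j : ℝ) ≤ ∑ i, (a j i : ℝ) * x i})
    (n : ℕ) (hn : 1 ≤ n)
    (J : Ideal (MvPolynomial (Fin r) k)) (hJ : IsIntClosure (I ^ n) J)
    (α : Fin r →₀ ℕ) :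
    ∀ F : Finset (Fin r),
      F ∈ degComplex J α ↔
        ∃ j : Fin q, (∑ i, a j i * α i) < n * b j ∧ ∀ i ∈ F, a j i = 0 := by
  intro F
  simpa only [Finsupp.weight_eq_sum_mul] using mem_degComplex_iff_of_monomial_mem_iff a
    (fun j => n * b j) (monomial_mem_intClosure_iff hI hNP hn hJ) α F

/-- if the Newton polyhedron `NP(I)` is defined by the inequalities
`⟨a_j, x⟩ ≥ b_j` (`j = 1,...,q`), then for any `α ∈ ℕ^r` and `n ≥ 1` the degree complex
`Δ_α(\overline{I^n})` is generated by the faces `[r] \ supp(a_j)` for those `j` with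
`⟨a_j, α⟩ < n b_j`. -/
theorem degComplex_intClosure_pow {k : Type*} [Field k] {r q : ℕ}
    (I : Ideal (MvPolynomial (Fin r) k)) (hI : IsMonomialIdeal I) (hproper : I ≠ ⊤)
    (a : Fin q → Fin r → ℕ) (b : Fin q → ℕ)
    (hNP : newtonPolyhedron I =
      {x : Fin r → ℝ | ∀ j : Fin q, (b j : ℝ) ≤ ∑ i, (a j i : ℝ) * x i})
    (n : ℕ) (hn : 1 ≤ n)
    (J : Ideal (MvPolynomial (Fin r) k)) (hJ : IsIntClosure (I ^ n) J)
    (α : Fin r →₀ ℕ) :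
    ∀ F : Finset (Fin r),
      F ∈ degComplex J α ↔
        ∃ j : Fin q, (∑ i, a j i * α i) < n * b j ∧ ∀ i ∈ F, a j i = 0 :=
  degComplex_intClosure_pow_general I hI a b hNP n hn J hJ α
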